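/- arXiv:math/0609257 — 4 statements merged into one kernel-verified Lean document; each statement's English description precedes it below -/
import Mathlib

section
/- Let P be a partially ordered set and x1 ≤ x2 in P. Then the map G_{x1≤x2} : G_{x1} → G_{x2} is well defined (every y ∈ Star x1 with y ∈ Star x2 gives an element of G_{x2}), is monotone with respect to the orders of G_{x1} and G_{x2}, and sends the element ∞ of G_{x1} to the element ∞ of G_{x2}. -/
/-- `starP p = {x ∈ P | ∃ y, p ≤ y ∧ x ≤ y}`. -/
def starP {P : Type*} [PartialOrder P] (p : P) : Set P := {x | ∃ y, p ≤ y ∧ x ≤ y}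

/-- `linkP p = {x ∈ starP p | ¬ p ≤ x}`. -/
def linkP {P : Type*} [PartialOrder P] (p : P) : Set P := {x | x ∈ starP p ∧ ¬ p ≤ x}

/-- The tangent fiber `G_x`: the set `Star x` together with an extra element `∞`
(modelled as `none`). -/
def GFiber {P : Type*} [PartialOrder P] (x : P) : Type _ := Option {y : P // y ∈ starP x}

/-- The relation on the tangent fiber `G_x`. -/
def GRel {P : Type*} [PartialOrder P] (x : P) : GFiber x → GFiber x → Prop
  | some y1, some y2 => (y1 : P) ≤ (y2 : P)
  | some y1, none => (y1 : P) ∈ linkP x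
  | none, some _ => False
  | none, none => True

open Classical in
/-- The transition map `G_{x1 ≤ x2} : G_{x1} → G_{x2}`. -/
noncomputable def GMap {P : Type*} [PartialOrder P] {x1 x2 : P} (_ : x1 ≤ x2) : GFiber x1 → GFiber x2
  | some y => if h' : (y : P) ∈ starP x2 then some ⟨(y : P), h'⟩ else none
  | none => none

section TangentFiber

variable {P : Type*} [PartialOrder P]

theorem mem_starP_of_le {p x : P} (h : p ≤ x) : x ∈ starP p := ⟨x, h, le_rfl⟩

theorem isLowerSet_starP (p : P) : IsLowerSet (starP p) :=
  fun _ _ hyx ⟨z, hpz, hxz⟩ => ⟨z, hpz, hyx.trans hxz⟩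

theorem mem_linkP_of_le_of_mem_linkP {x1 x2 y : P} (h : x1 ≤ x2) (hy : y ∈ linkP x1)
    (hy2 : y ∈ starP x2) : y ∈ linkP x2 :=
  ⟨hy2, fun hx2y => hy.2 (h.trans hx2y)⟩

theorem mem_linkP_of_le_of_notMem_starP {p y z : P} (hy : y ∈ starP p) (hyz : y ≤ z)
    (hz : z ∉ starP p) : y ∈ linkP p :=
  ⟨hy, fun hpy => hz (mem_starP_of_le (hpy.trans hyz))⟩

variable {x1 x2 : P} (h : x1 ≤ x2)

theorem GMap_some_of_mem {y : {y : P // y ∈ starP x1}} (hy : (y : P) ∈ starP x2) :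
    GMap h (some y) = some ⟨y, hy⟩ :=
  dif_pos hy

theorem GMap_some_of_notMem {y : {y : P // y ∈ starP x1}} (hy : (y : P) ∉ starP x2) :
    GMap h (some y) = none :=
  dif_neg hy

theorem GRel_GMap {a b : GFiber x1} (hab : GRel x1 a b) :
    GRel x2 (GMap h a) (GMap h b) := by
  rcases a with _ | y1 <;> rcases b with _ | y2
  · trivial
  · exact hab.elim
  · by_cases hy1 : (y1 : P) ∈ starP x2
    · rw [GMap_some_of_mem h hy1]
      exact mem_linkP_of_le_of_mem_linkP h hab hy1
    · rw [GMap_some_of_notMem h hy1]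
      trivial
  · by_cases hy2 : (y2 : P) ∈ starP x2
    · rw [GMap_some_of_mem h (isLowerSet_starP x2 hab hy2), GMap_some_of_mem h hy2]
      exact hab
    · rw [GMap_some_of_notMem h hy2]
      by_cases hy1 : (y1 : P) ∈ starP x2
      · rw [GMap_some_of_mem h hy1]
        exact mem_linkP_of_le_of_notMem_starP hy1 hab hy2
      · rw [GMap_some_of_notMem h hy1]
        trivial

end TangentFiber

theorem stmt2 {P : Type*} [PartialOrder P] {x1 x2 : P} (h : x1 ≤ x2) :
    (∀ (y : P) (hy1 : y ∈ starP x1) (hy2 : y ∈ starP x2),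
      GMap h (some ⟨y, hy1⟩) = some ⟨y, hy2⟩) ∧
    (∀ a b : GFiber x1, GRel x1 a b → GRel x2 (GMap h a) (GMap h b)) ∧
    GMap h (none : GFiber x1) = (none : GFiber x2) :=
  ⟨fun _ _ hy2 => GMap_some_of_mem h hy2, fun _ _ => GRel_GMap h, rfl⟩
end

section
/- Let P be a partially ordered set. The assignment x ↦ G_x, (x1 ≤ x2) ↦ G_{x1≤x2} is functorial: for every x ∈ P the map G_{x≤x} is the identity of G_x, and for every chain x1 ≤ x2 ≤ x3 in P one has G_{x2≤x3} ∘ G_{x1≤x2} = G_{x1≤x3}. (The composition law uses that Star x3 ⊆ Star x2 whenever x2 ≤ x3.) -/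
section

variable {P : Type*} [PartialOrder P]

theorem starP_antitone : Antitone (starP : P → Set P) := by
  rintro x2 x3 h y ⟨z, h3z, hyz⟩
  exact ⟨z, h.trans h3z, hyz⟩

/- Named constructors typed as `GFiber x`: stated with `Option.some`/`Option.none`, the
lemmas below would rewrite to terms of type `Option _`, which `rw` rejects where a
`GFiber _` is expected. -/
namespace GFiber

def infty (x : P) : GFiber x := none

def of {x : P} (y : P) (hy : y ∈ starP x) : GFiber x := some ⟨y, hy⟩

end GFiber

open GFiber

variable {x1 x2 : P} (h : x1 ≤ x2)

theorem GMap_infty : GMap h (infty x1) = infty x2 := rfl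

theorem GMap_of_mem {y : P} (hy1 : y ∈ starP x1) (hy2 : y ∈ starP x2) :
    GMap h (of y hy1) = of y hy2 := dif_pos hy2

theorem GMap_of_notMem {y : P} (hy1 : y ∈ starP x1) (hy2 : y ∉ starP x2) :
    GMap h (of y hy1) = infty x2 := dif_neg hy2

theorem GMap_refl (x : P) : GMap (le_refl x) = id := by
  funext g
  rcases g with _ | ⟨y, hy⟩
  · rfl
  · exact GMap_of_mem _ hy hy

theorem GMap_comp {x3 : P} (h23 : x2 ≤ x3) : GMap h23 ∘ GMap h = GMap (h.trans h23) := by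
  funext g
  rcases g with _ | ⟨y, hy1⟩
  · rfl
  show GMap h23 (GMap h (of y hy1)) = GMap _ (of y hy1)
  by_cases hy2 : y ∈ starP x2
  · rw [GMap_of_mem h hy1 hy2]
    by_cases hy3 : y ∈ starP x3
    · rw [GMap_of_mem _ _ hy3, GMap_of_mem _ _ hy3]
    · rw [GMap_of_notMem _ _ hy3, GMap_of_notMem _ _ hy3]
  · have hy3 : y ∉ starP x3 := fun hy3 => hy2 (starP_antitone h23 hy3)
    rw [GMap_of_notMem h hy1 hy2, GMap_infty, GMap_of_notMem _ _ hy3]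

end

theorem stmt3 {P : Type*} [PartialOrder P] :
    (∀ x : P, GMap (le_refl x) = (id : GFiber x → GFiber x)) ∧
    (∀ x1 x2 x3 : P, ∀ (h12 : x1 ≤ x2) (h23 : x2 ≤ x3),
      (GMap h23 ∘ GMap h12 : GFiber x1 → GFiber x3) = GMap (h12.trans h23)) ∧
    (∀ x2 x3 : P, x2 ≤ x3 → starP x3 ⊆ starP x2) :=
  ⟨GMap_refl, fun _ _ _ h12 h23 => GMap_comp h12 h23, fun _ _ h => starP_antitone h⟩
end

section
/- Let P be a partially ordered set. Then the relation defined on E P — namely (x1,y1) ≤ (x2,y2) iff x1 ≤ x2 in P and: y1 ≤ y2 in P when y1, y2 ∈ P; ¬(x2 ≤ y1) (equivalently, y1 ∈ Link x2 or y1 ∉ Star x2) when y1 ∈ P and y2 = ∞; and y2 = ∞ when y1 = ∞ — is a partial order on E P (reflexive, antisymmetric, transitive). -/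
/-- `DP P = {(x,y) | ∃ z, x ≤ z ∧ y ≤ z}`. -/
def DP (P : Type*) [PartialOrder P] : Set (P × P) := {q | ∃ z, q.1 ≤ z ∧ q.2 ≤ z}

/-- `E P = D P ∪ (P × {∞})`, modelled inside `P × Option P` with `∞ = none`. -/
def EP (P : Type*) [PartialOrder P] : Set (P × Option P) :=
  {a | (∃ y : P, a.2 = some y ∧ (a.1, y) ∈ DP P) ∨ a.2 = none}

/-- The order relation on `E P`:  `(x1,y1) ≤ (x2,y2)` iff `x1 ≤ x2` and:
`y1 ≤ y2` if `y1, y2 ∈ P`; `¬ x2 ≤ y1` if `y1 ∈ P`, `y2 = ∞`; `y2 = ∞` if `y1 = ∞`. -/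
def ERel {P : Type*} [PartialOrder P] (a b : P × Option P) : Prop :=
  a.1 ≤ b.1 ∧
    match a.2, b.2 with
    | some y1, some y2 => y1 ≤ y2
    | some y1, none => ¬ b.1 ≤ y1
    | none, some _ => False
    | none, none => True

theorem stmt7 {P : Type*} [PartialOrder P] :
    (∀ a ∈ EP P, ERel a a) ∧
    (∀ a ∈ EP P, ∀ b ∈ EP P, ERel a b → ERel b a → a = b) ∧
    (∀ a ∈ EP P, ∀ b ∈ EP P, ∀ c ∈ EP P, ERel a b → ERel b c → ERel a c) := by
  refine ⟨?_, ?_, ?_⟩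
  · rintro ⟨x, _ | y⟩ _
    · exact ⟨le_rfl, trivial⟩
    · exact ⟨le_rfl, le_rfl⟩
  · rintro ⟨x1, y1⟩ _ ⟨x2, y2⟩ _ ⟨h1, h2⟩ ⟨h3, h4⟩
    have hx : x1 = x2 := le_antisymm h1 h3
    cases y1 with
    | none => cases y2 with
      | none => simp [hx]
      | some y2 => exact absurd h2 (by simp)
    | some y1 => cases y2 with
      | none => exact absurd h4 (by simp)
      | some y2 => simp [hx, le_antisymm h2 h4]
  · rintro ⟨x1, y1⟩ _ ⟨x2, y2⟩ _ ⟨x3, y3⟩ _ ⟨h1, h2⟩ ⟨h3, h4⟩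
    refine ⟨le_trans h1 h3, ?_⟩
    cases y1 with
    | none =>
      cases y2 with
      | none => cases y3 with
        | none => trivial
        | some y3 => exact h4
      | some y2 => exact h2.elim
    | some y1 =>
      cases y2 with
      | none => cases y3 with
        | none => exact fun h => h2 (le_trans h3 h)
        | some y3 => exact h4.elim
      | some y2 => cases y3 with
        | none => exact fun h => h4 (le_trans h (show y1 ≤ y2 from h2))
        | some y3 => exact le_trans h2 h4
end

section
/- Let P be a partially ordered set. The tangent bundle of P coincides with the homotopy colimit of the Gauss functor: the map φ : Hocolim G → E P defined by φ(x, y) = (x, y) for y ∈ Star x and φ(x, ∞_{G_x}) = (x, ∞) is a bijective order isomorphism of posets satisfying T P ∘ φ = Π; moreover φ carries the section x ↦ (x, ∞_{G_x}) of Π to the section s∞ of T P, and carries the map x ↦ (x, 0-element of G_x) to the diagonal section s0 of T P. -/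
/-- The relation of `Hocolim G` on `Σ x, G_x`:
`(x0,w0) ≤ (x1,w1)` iff `x0 ≤ x1` and `G_{x0≤x1}(w0) ≤ w1` in `G_{x1}`. -/
def HocolimGRel {P : Type*} [PartialOrder P] (a b : Σ x : P, GFiber x) : Prop :=
  ∃ h : a.1 ≤ b.1, GRel b.1 (GMap h a.2) b.2

/-- The comparison map `φ : Hocolim G → E P`, `(x, y) ↦ (x, y)' for `y ∈ Star x`,
`(x, ∞_{G_x}) ↦ (x, ∞)`. -/
def phi {P : Type*} [PartialOrder P] (a : Σ x : P, GFiber x) : P × Option P :=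
  (a.1, Option.map Subtype.val a.2)

/-! The fiber of `Hocolim G` over `x` is `Star x ⊔ {∞}`, exactly the fiber of `E P` over `x`, so
`φ` is a bijection over `P`. For the order, note that `Star x₂` is a lower set containing every
`y ≥ x₂`. Hence if `y₁ ≤ y₂ ∈ Star x₂`, the transition map leaves `y₁` unchanged. Also
`G_{x₁≤x₂}(y₁) ≤ ∞` holds iff `y₁ ∉ Star x₂` or `y₁ ∈ Link x₂`, that is, iff `¬ x₂ ≤ y₁`. -/

section GaussFunctor

variable {P : Type*} [PartialOrder P]

lemma mem_starP_of_le_s12 {x y₁ y₂ : P} (hy : y₁ ≤ y₂) (hy₂ : y₂ ∈ starP x) : y₁ ∈ starP x :=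
  let ⟨z, hxz, hy₂z⟩ := hy₂
  ⟨z, hxz, hy.trans hy₂z⟩

lemma mem_starP_of_ge {x y : P} (hxy : x ≤ y) : y ∈ starP x :=
  ⟨y, hxy, le_rfl⟩

lemma gMap_some_of_mem {x₁ x₂ : P} (h : x₁ ≤ x₂) (y : {y : P // y ∈ starP x₁})
    (hy : (y : P) ∈ starP x₂) : GMap h (some y) = some ⟨y, hy⟩ :=
  dif_pos hy

lemma gMap_some_of_not_mem {x₁ x₂ : P} (h : x₁ ≤ x₂) (y : {y : P // y ∈ starP x₁})
    (hy : (y : P) ∉ starP x₂) : GMap h (some y) = none :=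
  dif_neg hy

@[simp]
lemma gMap_none {x₁ x₂ : P} (h : x₁ ≤ x₂) : GMap h none = none :=
  rfl

lemma gRel_gMap_some_some_iff {x₁ x₂ : P} (h : x₁ ≤ x₂) (y₁ : {y : P // y ∈ starP x₁})
    (y₂ : {y : P // y ∈ starP x₂}) : GRel x₂ (GMap h (some y₁)) (some y₂) ↔ (y₁ : P) ≤ y₂ := by
  by_cases hy₁ : (y₁ : P) ∈ starP x₂
  · rw [gMap_some_of_mem h y₁ hy₁]
    rfl
  · rw [gMap_some_of_not_mem h y₁ hy₁]
    exact ⟨False.elim, fun hle => absurd (mem_starP_of_le_s12 hle y₂.2) hy₁⟩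

lemma gRel_gMap_some_none_iff {x₁ x₂ : P} (h : x₁ ≤ x₂) (y₁ : {y : P // y ∈ starP x₁}) :
    GRel x₂ (GMap h (some y₁)) none ↔ ¬ x₂ ≤ y₁ := by
  by_cases hy₁ : (y₁ : P) ∈ starP x₂
  · rw [gMap_some_of_mem h y₁ hy₁]
    exact and_iff_right hy₁
  · rw [gMap_some_of_not_mem h y₁ hy₁]
    exact iff_of_true trivial fun hle => hy₁ (mem_starP_of_ge hle)

lemma phi_injective : Function.Injective (phi (P := P)) := by
  rintro ⟨x, w₁⟩ ⟨x', w₂⟩ h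
  obtain ⟨rfl, hw⟩ := Prod.mk.inj h
  exact congrArg _ (Option.map_injective Subtype.val_injective hw)

lemma range_phi : Set.range (phi (P := P)) = EP P := by
  ext ⟨x, oy⟩
  constructor
  · rintro ⟨⟨x, _ | y⟩, hxy⟩ <;> cases hxy
    · exact Or.inr rfl
    · exact Or.inl ⟨y, rfl, y.2⟩
  · rintro (⟨y, rfl, hy⟩ | rfl)
    · exact ⟨⟨x, some ⟨y, hy⟩⟩, rfl⟩
    · exact ⟨⟨x, none⟩, rfl⟩

lemma hocolimGRel_iff_eRel_phi (a b : Σ x : P, GFiber x) :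
    HocolimGRel a b ↔ ERel (phi a) (phi b) := by
  obtain ⟨x₁, _ | y₁⟩ := a <;> obtain ⟨x₂, _ | y₂⟩ := b <;>
    simp only [HocolimGRel, ERel, phi, Option.map_none, Option.map_some, gMap_none,
      gRel_gMap_some_some_iff, gRel_gMap_some_none_iff, exists_prop] <;> rfl

end GaussFunctor

theorem stmt12 {P : Type*} [PartialOrder P] :
    -- `φ` is a bijection from `Hocolim G` onto `E P` ...
    Function.Injective (phi (P := P)) ∧
    Set.range (phi (P := P)) = EP P ∧
    -- ... which is an order isomorphism
    (∀ a b : Σ x : P, GFiber x, HocolimGRel a b ↔ ERel (phi a) (phi b)) ∧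
    -- `T P ∘ φ = Π`
    (∀ a : Σ x : P, GFiber x, (phi a).1 = a.1) ∧
    -- `φ` carries the section `x ↦ (x, ∞_{G_x})` of `Π` to the section `s∞` of `T P`
    (∀ x : P, phi ⟨x, (none : GFiber x)⟩ = (x, (none : Option P))) ∧
    -- `φ` carries `x ↦ (x, 0-element of G_x)` to the diagonal section `s0` of `T P`
    (∀ (x : P) (hx : x ∈ starP x), phi ⟨x, (some ⟨x, hx⟩ : GFiber x)⟩ = (x, some x)) :=
  ⟨phi_injective, range_phi, hocolimGRel_iff_eRel_phi, fun _ => rfl, fun _ => rfl, fun _ _ => rfl⟩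
end
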